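/- In the Arimoto iteration for a product source, if the initial reproduction distribution factorizes as q^{(0)}_𝒦 = ∏ᵢ q^{(0)}_{kᵢ}, the source distribution factorizes as p_𝒥 = ∏ᵢ p_{jᵢ}, and the distortion is additive δ_{𝒥𝒦} = Σᵢ δ_{jᵢkᵢ}, then after one Arimoto update step the quantities w^{(1)}_{𝒦|𝒥} and q^{(1)}_𝒦 also factorize: w^{(1)}_{𝒦|𝒥} = ∏ᵢ w^{(1)}_{kᵢ|jᵢ} and q^{(1)}_𝒦 = ∏ᵢ q^{(1)}_{kᵢ}, where the per-component factors are given by the single-component Arimoto updates. -/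

import Mathlib

open Real Finset

/-- One-step Arimoto update for the conditional distribution `w_{k|j}`. -/
noncomputable def arimotoW {X Y : Type*} [Fintype Y]
    (q : Y → ℝ) (δ : X → Y → ℝ) (t : ℝ) (j : X) (k : Y) : ℝ :=
  q k * (2:ℝ) ^ (t * δ j k) / ∑ k', q k' * (2:ℝ) ^ (t * δ j k')

/-- One-step Arimoto update for the reproduction distribution `q_k`. -/
noncomputable def arimotoQ {X Y : Type*} [Fintype X] [Fintype Y]
    (p : X → ℝ) (q : Y → ℝ) (δ : X → Y → ℝ) (s t : ℝ) (k : Y) : ℝ :=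
  (∑ j, p j * (2:ℝ) ^ (-(s * t * δ j k)) * (arimotoW q δ t j k) ^ (1 + s)) ^ (1 / (1 + s)) /
    ∑ k', (∑ j, p j * (2:ℝ) ^ (-(s * t * δ j k')) * (arimotoW q δ t j k') ^ (1 + s)) ^ (1 / (1 + s))

/-!
Both updates are normalisations `f k / ∑ k', f k'` of a weight `f`. For the product source with
additive distortion, `2 ^ (c * ∑ i, δᵢ)` splits into `∏ i, 2 ^ (c * δᵢ)`, so every weight on the
super-alphabet is a product `∏ i, fᵢ (Kᵢ)` of per-component weights; the normaliser then
factorises too, since `∑ K, ∏ i, fᵢ (Kᵢ) = ∏ i, ∑ k, fᵢ k`. The real powers `1 + s` and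
`1 / (1 + s)` pass through these products because all the weights are nonnegative.
-/

theorem prod_div_sum_pi_prod {ι α R : Type*} [Fintype ι] [DecidableEq ι] [Fintype α] [Field R]
    (f : ι → α → R) (K : ι → α) :
    (∏ i, f i (K i)) / ∑ K' : ι → α, ∏ i, f i (K' i) = ∏ i, f i (K i) / ∑ k, f i k := by
  rw [prod_div_distrib, Fintype.prod_sum]

theorem Real.rpow_mul_sum {ι : Type*} [Fintype ι] {b : ℝ} (hb : 0 < b) (c : ℝ) (d : ι → ℝ) :
    b ^ (c * ∑ i, d i) = ∏ i, b ^ (c * d i) := by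
  rw [mul_sum, rpow_sum_of_pos hb]

section Arimoto

variable {ι X Y : Type*} [Fintype ι] [DecidableEq ι] [Fintype Y]

theorem arimotoW_nonneg {q : Y → ℝ} (hq : ∀ k, 0 ≤ q k) (δ : X → Y → ℝ) (t : ℝ) (j : X) (k : Y) :
    0 ≤ arimotoW q δ t j k := by
  have hterm : ∀ k', 0 ≤ q k' * (2:ℝ) ^ (t * δ j k') := fun k' => by
    have := hq k'
    positivity
  exact div_nonneg (hterm k) (sum_nonneg fun k' _ => hterm k')

theorem arimotoW_pi (q : ι → Y → ℝ) (δ : ι → X → Y → ℝ) (t : ℝ)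
    (J : ι → X) (K : ι → Y) :
    arimotoW (fun K' : ι → Y => ∏ i, q i (K' i))
        (fun (J' : ι → X) (K' : ι → Y) => ∑ i, δ i (J' i) (K' i)) t J K
      = ∏ i, arimotoW (q i) (δ i) t (J i) (K i) := by
  simp only [arimotoW, rpow_mul_sum two_pos, ← prod_mul_distrib]
  exact prod_div_sum_pi_prod (fun i k => q i k * (2:ℝ) ^ (t * δ i (J i) k)) K

variable [Fintype X]

noncomputable def arimotoMass (p : X → ℝ) (q : Y → ℝ) (δ : X → Y → ℝ) (s t : ℝ) (k : Y) : ℝ :=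
  ∑ j, p j * (2:ℝ) ^ (-(s * t * δ j k)) * (arimotoW q δ t j k) ^ (1 + s)

theorem arimotoQ_eq_arimotoMass (p : X → ℝ) (q : Y → ℝ) (δ : X → Y → ℝ) (s t : ℝ) (k : Y) :
    arimotoQ p q δ s t k
      = arimotoMass p q δ s t k ^ (1 / (1 + s)) / ∑ k', arimotoMass p q δ s t k' ^ (1 / (1 + s)) :=
  rfl

theorem arimotoMass_nonneg {p : X → ℝ} {q : Y → ℝ} (hp : ∀ j, 0 ≤ p j) (hq : ∀ k, 0 ≤ q k)
    (δ : X → Y → ℝ) (s t : ℝ) (k : Y) : 0 ≤ arimotoMass p q δ s t k := by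
  refine sum_nonneg fun j _ => ?_
  have := hp j
  have := arimotoW_nonneg hq δ t j k
  positivity

theorem arimotoMass_pi {q : ι → Y → ℝ} (hq : ∀ i k, 0 ≤ q i k)
    (p : ι → X → ℝ) (δ : ι → X → Y → ℝ) (s t : ℝ) (K : ι → Y) :
    arimotoMass (fun J' : ι → X => ∏ i, p i (J' i)) (fun K' : ι → Y => ∏ i, q i (K' i))
        (fun (J' : ι → X) (K' : ι → Y) => ∑ i, δ i (J' i) (K' i)) s t K
      = ∏ i, arimotoMass (p i) (q i) (δ i) s t (K i) := by
  simp only [arimotoMass, arimotoW_pi, ← neg_mul, rpow_mul_sum two_pos,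
    ← finsetProd_rpow _ _ (fun i _ => arimotoW_nonneg (hq i) (δ i) t _ _), ← prod_mul_distrib]
  rw [Fintype.prod_sum]

end Arimoto

theorem arimoto_update_factorizes_general {X Y : Type*} [Fintype X] [Fintype Y] (N : ℕ)
    (p : Fin N → X → ℝ) (q : Fin N → Y → ℝ) (δ : Fin N → X → Y → ℝ) (s t : ℝ)
    (hp : ∀ i j, 0 < p i j) (hq : ∀ i k, 0 < q i k) :
    (∀ (J : Fin N → X) (K : Fin N → Y),
      arimotoW (fun K' : Fin N → Y => ∏ i, q i (K' i)) (fun (J' : Fin N → X) (K' : Fin N → Y) => ∑ i, δ i (J' i) (K' i)) t J K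
        = ∏ i, arimotoW (q i) (δ i) t (J i) (K i)) ∧
    (∀ K : Fin N → Y,
      arimotoQ (fun J' : Fin N → X => ∏ i, p i (J' i)) (fun K' : Fin N → Y => ∏ i, q i (K' i))
          (fun (J' : Fin N → X) (K' : Fin N → Y) => ∑ i, δ i (J' i) (K' i)) s t K
        = ∏ i, arimotoQ (p i) (q i) (δ i) s t (K i)) := by
  have hq' : ∀ i k, 0 ≤ q i k := fun i k => (hq i k).le
  have hmass : ∀ i k, 0 ≤ arimotoMass (p i) (q i) (δ i) s t k := fun i =>
    arimotoMass_nonneg (fun j => (hp i j).le) (hq' i) (δ i) s t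
  refine ⟨arimotoW_pi q δ t, fun K => ?_⟩
  simp only [arimotoQ_eq_arimotoMass, arimotoMass_pi hq',
    ← finsetProd_rpow _ _ (fun i _ => hmass i _)]
  exact prod_div_sum_pi_prod (fun i k => arimotoMass (p i) (q i) (δ i) s t k ^ (1 / (1 + s))) K

theorem arimoto_update_factorizes {X Y : Type*} [Fintype X] [Fintype Y] (N : ℕ)
    (p : Fin N → X → ℝ) (q : Fin N → Y → ℝ) (δ : Fin N → X → Y → ℝ) (s t : ℝ)
    (hs : 0 ≤ s) (ht : t ≤ 0)
    (hp : ∀ i j, 0 < p i j) (hq : ∀ i k, 0 < q i k) :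
    (∀ (J : Fin N → X) (K : Fin N → Y),
      arimotoW (fun K' : Fin N → Y => ∏ i, q i (K' i)) (fun (J' : Fin N → X) (K' : Fin N → Y) => ∑ i, δ i (J' i) (K' i)) t J K
        = ∏ i, arimotoW (q i) (δ i) t (J i) (K i)) ∧
    (∀ K : Fin N → Y,
      arimotoQ (fun J' : Fin N → X => ∏ i, p i (J' i)) (fun K' : Fin N → Y => ∏ i, q i (K' i))
          (fun (J' : Fin N → X) (K' : Fin N → Y) => ∑ i, δ i (J' i) (K' i)) s t K
        = ∏ i, arimotoQ (p i) (q i) (δ i) s t (K i)) :=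
  arimoto_update_factorizes_general N p q δ s t hp hq
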